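/- Let φ : X → Y and ψ : Y → Z be wiring diagrams, f ∈ P(X), g = P(φ)(f), and ω = ψ∘φ. Assume the induction hypothesis: S'_ω ∘ C_{ω,f} ∘ ∂ = (S'_φ × id_{⟪D_ψ⟫}) ∘ (C_{φ,f} × id_{⟪D_ψ⟫}) ∘ S'_ψ ∘ C_{ψ,g} ∘ ∂ as functions ⟪In Z⟫ → ⟪inDem ω⟫. Then C_{ψ,g} = (id_{⟪In Z⟫} × S''_φ × id_{⟪D_ψ⟫}) ∘ C_{ω,f} as functions ⟪In Z⟫ → ⟪Sup ψ⟫ (using the identification Sup(ω) = In Z ⊔ inSup(φ) ⊔ D_ψ and Sup(ψ) = In Z ⊔ Out Y ⊔ D_ψ). -/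

import Mathlib

universe u

/-- A function `f : List R → List S` is *n-historical* if it sends lists of length `t`
to lists of length `t + n`, and it commutes with the operation `∂ = List.dropLast`
of dropping the last entry of a nonempty list. -/
def Historical {R S : Type u} (n : ℕ) (f : List R → List S) : Prop :=
  (∀ ℓ : List R, (f ℓ).length = ℓ.length + n) ∧
    ∀ ℓ : List R, 1 ≤ ℓ.length → (f ℓ).dropLast = f ℓ.dropLast

/-- Glue a tuple of values indexed by `α` and a tuple of values indexed by `β` into a
tuple of values indexed by `α ⊕ β`.  (This realizes the "zipwith" identification of
lists over a disjoint union of wire sets with pairs of equal-length lists.) -/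
def glue {α β : Type} {F : α → Type u} {G : β → Type u}
    (a : ∀ x, F x) (b : ∀ y, G y) : ∀ w : α ⊕ β, Sum.elim F G w
  | Sum.inl x => a x
  | Sum.inr y => b y

/-- The product `p × q` of two functions between lists of tuples, acting on lists of
tuples indexed by disjoint unions of wire sets. -/
def prodMap {α α' β β' : Type} {F : α → Type u} {F' : α' → Type u}
    {G : β → Type u} {G' : β' → Type u}
    (p : List (∀ a, F a) → List (∀ a, F' a))
    (q : List (∀ b, G b) → List (∀ b, G' b)) :
    List (∀ w : α ⊕ β, Sum.elim F G w) → List (∀ w : α' ⊕ β', Sum.elim F' G' w) :=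
  fun ℓ =>
    List.zipWith glue (p (ℓ.map fun x a => x (Sum.inl a)))
      (q (ℓ.map fun x b => x (Sum.inr b)))

/-- A wiring diagram from a black box `X` (wires `InX`, `OutX`) to a black box `Y`
(wires `InY`, `OutY`), where a wire `w` carries the pointed value set `v- w`.
It consists of a finite set `D` of delay nodes carrying pointed value sets
(`vD` with default values `dD`), together with a supplier assignment
`s : Dem → Sup` (with `Dem = OutY ⊕ InX ⊕ D` and `Sup = InY ⊕ OutX ⊕ D`) that
preserves value sets (`compat`) and satisfies non-instantaneity: on `OutY` it lands
in `OutX ⊕ D` (witnessed by `sOut` and `noninst`). -/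
structure WD (InX OutX InY OutY : Type)
    (vInX : InX → Type u) (vOutX : OutX → Type u)
    (vInY : InY → Type u) (vOutY : OutY → Type u) where
  D : Type
  [fintypeD : Fintype D]
  vD : D → Type u
  dD : ∀ d, vD d
  s : OutY ⊕ InX ⊕ D → InY ⊕ OutX ⊕ D
  sOut : OutY → OutX ⊕ D
  noninst : ∀ z, s (Sum.inl z) = Sum.inr (sOut z)
  compat : ∀ w, Sum.elim vInY (Sum.elim vOutX vD) (s w)
      = Sum.elim vOutY (Sum.elim vInX vD) w

attribute [instance] WD.fintypeD

namespace WD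

variable {InX OutX InY OutY InZ OutZ : Type}
  {vInX : InX → Type u} {vOutX : OutX → Type u}
  {vInY : InY → Type u} {vOutY : OutY → Type u}
  {vInZ : InZ → Type u} {vOutZ : OutZ → Type u}

/-- The value sets carried by the supply wires `Sup(φ) = InY ⊕ OutX ⊕ D_φ`. -/
def vSup (φ : WD InX OutX InY OutY vInX vOutX vInY vOutY) :
    InY ⊕ OutX ⊕ φ.D → Type u :=
  Sum.elim vInY (Sum.elim vOutX φ.vD)

/-- The shuttle function `S'_φ : ⟪Sup φ⟫ → ⟪inDem φ⟫`, sending the values on the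
supply wires to the internal demand wires `inDem(φ) = InX ⊕ D_φ` along the supplier
assignment, entrywise in time. -/
def S' (φ : WD InX OutX InY OutY vInX vOutX vInY vOutY) :
    List (∀ w, φ.vSup w) → List (∀ w : InX ⊕ φ.D, Sum.elim vInX φ.vD w) :=
  List.map fun x w => cast (φ.compat (Sum.inr w)) (x (φ.s (Sum.inr w)))

/-- The shuttle function `S''_φ : ⟪inSup φ⟫ → ⟪Out Y⟫`, reading off the values
demanded by the global outputs `OutY` from the internal supply wires
`inSup(φ) = OutX ⊕ D_φ` (well defined by non-instantaneity). -/
def S'' (φ : WD InX OutX InY OutY vInX vOutX vInY vOutY) :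
    List (∀ w : OutX ⊕ φ.D, Sum.elim vOutX φ.vD w) → List (∀ z, vOutY z) :=
  List.map fun y z =>
    cast ((congrArg φ.vSup (φ.noninst z)).symm.trans (φ.compat (Sum.inl z)))
      (y (φ.sOut z))

/-- The evaluation function `E_{φ,f} = f × δ¹ : ⟪inDem φ⟫ → ⟪inSup φ⟫`, applying the
propagator `f` on the `InX` coordinates and the 1-moment delay (prepending the
default value) on the delay coordinates. -/
def E (φ : WD InX OutX InY OutY vInX vOutX vInY vOutY)
    (f : List (∀ i, vInX i) → List (∀ o, vOutX o)) :
    List (∀ w : InX ⊕ φ.D, Sum.elim vInX φ.vD w) →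
      List (∀ w : OutX ⊕ φ.D, Sum.elim vOutX φ.vD w) :=
  fun ℓ =>
    List.zipWith glue (f (ℓ.map fun x i => x (Sum.inl i)))
      (φ.dD :: ℓ.map fun x d => x (Sum.inr d))

/-- The cascade `C_{φ,f} : ⟪In Y⟫ → ⟪Sup φ⟫`, defined by recursion on the length:
`C([]) = []` and `C(ℓ) = ℓ ⋎ E_{φ,f}(S'_φ(C(∂ℓ)))` for nonempty `ℓ`. -/
def C (φ : WD InX OutX InY OutY vInX vOutX vInY vOutY)
    (f : List (∀ i, vInX i) → List (∀ o, vOutX o)) :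
    List (∀ i, vInY i) → List (∀ w, φ.vSup w)
  | [] => []
  | a :: as => List.zipWith glue (a :: as) (φ.E f (φ.S' (φ.C f (a :: as).dropLast)))
termination_by ℓ => ℓ.length
decreasing_by simp [List.length_dropLast]

/-- The propagator `P(φ)(f) = S''_φ ∘ E_{φ,f} ∘ S'_φ ∘ C_{φ,f} : ⟪In Y⟫ → ⟪Out Y⟫`
obtained by filling the inner box of `φ` with the propagator `f`. -/
def P (φ : WD InX OutX InY OutY vInX vOutX vInY vOutY)
    (f : List (∀ i, vInX i) → List (∀ o, vOutX o)) :
    List (∀ i, vInY i) → List (∀ z, vOutY z) :=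
  fun ℓ => φ.S'' (φ.E f (φ.S' (φ.C f ℓ)))

/-- The map `f̄ : Sup(ψ) → Sup(ψ∘φ)`: the identity on `In Z` and `D_ψ`, and equal to
`s_φ|_{Out Y}` on `Out Y`. -/
def fbar (ψ : WD InY OutY InZ OutZ vInY vOutY vInZ vOutZ)
    (φ : WD InX OutX InY OutY vInX vOutX vInY vOutY) :
    InZ ⊕ OutY ⊕ ψ.D → InZ ⊕ OutX ⊕ (φ.D ⊕ ψ.D)
  | Sum.inl z => Sum.inl z
  | Sum.inr (Sum.inl o) =>
      match φ.sOut o with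
      | Sum.inl x => Sum.inr (Sum.inl x)
      | Sum.inr d => Sum.inr (Sum.inr (Sum.inl d))
  | Sum.inr (Sum.inr d) => Sum.inr (Sum.inr (Sum.inr d))

/-- The map `h : Sup(φ) → Sup(ψ∘φ)`: equal to `f̄ ∘ s_ψ|_{In Y}` on `In Y` and the
identity on `Out X` and `D_φ`. -/
def hmap (ψ : WD InY OutY InZ OutZ vInY vOutY vInZ vOutZ)
    (φ : WD InX OutX InY OutY vInX vOutX vInY vOutY) :
    InY ⊕ OutX ⊕ φ.D → InZ ⊕ OutX ⊕ (φ.D ⊕ ψ.D)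
  | Sum.inl i => fbar ψ φ (ψ.s (Sum.inr (Sum.inl i)))
  | Sum.inr (Sum.inl x) => Sum.inr (Sum.inl x)
  | Sum.inr (Sum.inr d) => Sum.inr (Sum.inr (Sum.inl d))

/-- The restriction of `f̄` to `Out Y ⊔ D_ψ`, landing in the internal supplies of the
composite. -/
def fbarOut (ψ : WD InY OutY InZ OutZ vInY vOutY vInZ vOutZ)
    (φ : WD InX OutX InY OutY vInX vOutX vInY vOutY) :
    OutY ⊕ ψ.D → OutX ⊕ (φ.D ⊕ ψ.D)
  | Sum.inl o =>
      match φ.sOut o with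
      | Sum.inl x => Sum.inl x
      | Sum.inr d => Sum.inr (Sum.inl d)
  | Sum.inr d => Sum.inr (Sum.inr d)

theorem fbar_inr (ψ : WD InY OutY InZ OutZ vInY vOutY vInZ vOutZ)
    (φ : WD InX OutX InY OutY vInX vOutX vInY vOutY) (u : OutY ⊕ ψ.D) :
    fbar ψ φ (Sum.inr u) = Sum.inr (fbarOut ψ φ u) := by
  rcases u with o | d
  · rcases h : φ.sOut o with x | d <;> simp [fbar, fbarOut, h]
  · rfl

theorem vSup_fbar (ψ : WD InY OutY InZ OutZ vInY vOutY vInZ vOutZ)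
    (φ : WD InX OutX InY OutY vInX vOutX vInY vOutY) (u : InZ ⊕ OutY ⊕ ψ.D) :
    Sum.elim vInZ (Sum.elim vOutX (Sum.elim φ.vD ψ.vD)) (fbar ψ φ u)
      = Sum.elim vInZ (Sum.elim vOutY ψ.vD) u := by
  rcases u with z | u
  · rfl
  rcases u with o | d
  · have h0 := (congrArg (Sum.elim vInY (Sum.elim vOutX φ.vD))
      (φ.noninst o)).symm.trans (φ.compat (Sum.inl o))
    rcases h : φ.sOut o with x | d
    · rw [h] at h0
      simpa [fbar, h] using h0
    · rw [h] at h0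
      simpa [fbar, h] using h0
  · rfl

theorem vSup_hmap (ψ : WD InY OutY InZ OutZ vInY vOutY vInZ vOutZ)
    (φ : WD InX OutX InY OutY vInX vOutX vInY vOutY) (u : InY ⊕ OutX ⊕ φ.D) :
    Sum.elim vInZ (Sum.elim vOutX (Sum.elim φ.vD ψ.vD)) (hmap ψ φ u)
      = Sum.elim vInY (Sum.elim vOutX φ.vD) u := by
  rcases u with i | u
  · exact (vSup_fbar ψ φ (ψ.s (Sum.inr (Sum.inl i)))).trans
      (ψ.compat (Sum.inr (Sum.inl i)))
  rcases u with x | d <;> rfl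

/-- The composite wiring diagram `ψ ∘ φ : X → Z` of `φ : X → Y` and `ψ : Y → Z`,
with delay nodes `D_φ ⊔ D_ψ`, whose supplier assignment is `h ∘ s_φ` on `In X ⊔ D_φ`
and `f̄ ∘ s_ψ` on `Out Z ⊔ D_ψ`. -/
def comp (ψ : WD InY OutY InZ OutZ vInY vOutY vInZ vOutZ)
    (φ : WD InX OutX InY OutY vInX vOutX vInY vOutY) :
    WD InX OutX InZ OutZ vInX vOutX vInZ vOutZ where
  D := φ.D ⊕ ψ.D
  vD := Sum.elim φ.vD ψ.vD
  dD := fun d =>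
    match d with
    | Sum.inl d => φ.dD d
    | Sum.inr d => ψ.dD d
  s := fun w =>
    match w with
    | Sum.inl z => fbar ψ φ (ψ.s (Sum.inl z))
    | Sum.inr (Sum.inl i) => hmap ψ φ (φ.s (Sum.inr (Sum.inl i)))
    | Sum.inr (Sum.inr (Sum.inl d)) => hmap ψ φ (φ.s (Sum.inr (Sum.inr d)))
    | Sum.inr (Sum.inr (Sum.inr d)) => fbar ψ φ (ψ.s (Sum.inr (Sum.inr d)))
  sOut := fun z => fbarOut ψ φ (ψ.sOut z)
  noninst := fun z => by
    show fbar ψ φ (ψ.s (Sum.inl z)) = _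
    rw [ψ.noninst z, fbar_inr]
  compat := fun w => by
    rcases w with z | w
    · exact (vSup_fbar ψ φ (ψ.s (Sum.inl z))).trans (ψ.compat (Sum.inl z))
    rcases w with i | d
    · exact (vSup_hmap ψ φ (φ.s (Sum.inr (Sum.inl i)))).trans
        (φ.compat (Sum.inr (Sum.inl i)))
    rcases d with d | d
    · exact (vSup_hmap ψ φ (φ.s (Sum.inr (Sum.inr d)))).trans
        (φ.compat (Sum.inr (Sum.inr d)))
    · exact (vSup_fbar ψ φ (ψ.s (Sum.inr (Sum.inr d)))).trans
        (ψ.compat (Sum.inr (Sum.inr d)))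

end WD

namespace WD

variable {InX OutX InY OutY InZ OutZ : Type}
  {vInX : InX → Type u} {vOutX : OutX → Type u}
  {vInY : InY → Type u} {vOutY : OutY → Type u}
  {vInZ : InZ → Type u} {vOutZ : OutZ → Type u}

/-- The canonical identification `Sup(ψ∘φ) = In Z ⊔ ((Out X ⊔ D_φ) ⊔ D_ψ)
= In Z ⊔ inSup(φ) ⊔ D_ψ`, entrywise on tuples of values. -/
def reassocSup (ψ : WD InY OutY InZ OutZ vInY vOutY vInZ vOutZ)
    (φ : WD InX OutX InY OutY vInX vOutX vInY vOutY)
    (x : ∀ w : InZ ⊕ OutX ⊕ (φ.D ⊕ ψ.D),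
      Sum.elim vInZ (Sum.elim vOutX (Sum.elim φ.vD ψ.vD)) w) :
    ∀ w : InZ ⊕ ((OutX ⊕ φ.D) ⊕ ψ.D),
      Sum.elim vInZ (Sum.elim (Sum.elim vOutX φ.vD) ψ.vD) w
  | Sum.inl z => x (Sum.inl z)
  | Sum.inr (Sum.inl (Sum.inl o)) => x (Sum.inr (Sum.inl o))
  | Sum.inr (Sum.inl (Sum.inr d)) => x (Sum.inr (Sum.inr (Sum.inl d)))
  | Sum.inr (Sum.inr d) => x (Sum.inr (Sum.inr (Sum.inr d)))

/-- The canonical identification `inDem(φ) ⊔ D_ψ = (In X ⊔ D_φ) ⊔ D_ψ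
= In X ⊔ (D_φ ⊔ D_ψ) = inDem(ψ∘φ)`, entrywise on tuples of values. -/
def reassocDem (ψ : WD InY OutY InZ OutZ vInY vOutY vInZ vOutZ)
    (φ : WD InX OutX InY OutY vInX vOutX vInY vOutY)
    (x : ∀ w : (InX ⊕ φ.D) ⊕ ψ.D, Sum.elim (Sum.elim vInX φ.vD) ψ.vD w) :
    ∀ w : InX ⊕ (φ.D ⊕ ψ.D), Sum.elim vInX (Sum.elim φ.vD ψ.vD) w
  | Sum.inl i => x (Sum.inl (Sum.inl i))
  | Sum.inr (Sum.inl d) => x (Sum.inl (Sum.inr d))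
  | Sum.inr (Sum.inr d) => x (Sum.inr d)

end WD

/-!
Both cascades are unfolded once on a nonempty input `ℓ`. Write `u = S'_ψ(C_{ψ,g}(∂ℓ))`, with
`In Y`-part `u₁` and `D_ψ`-part `u₂`. By the induction hypothesis the internal demands of `ψ ∘ φ`
at `∂ℓ` are `S'_φ(C_{φ,f}(u₁))` together with `u₂`, and since `E_{ψ∘φ,f} = E_{φ,f} × δ¹_ψ`
the new supplies of `ψ ∘ φ` are `E_{φ,f}(S'_φ(C_{φ,f}(u₁))) ⋎ δ¹(u₂)`. Applying `S''_φ` to the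
first factor gives `g(u₁) ⋎ δ¹(u₂) = E_{ψ,g}(u)`, which is the new supply of `ψ`. Because `f`
adds one to lengths, all lists that get zipped have equal lengths, so the products of maps
distribute over the zips.
-/

section ZipGlue

variable {α α' β β' : Type} {F : α → Type u} {F' : α' → Type u}
  {G : β → Type u} {G' : β' → Type u}

-- The ascription `β := ∀ a, F a` matches the projection as it occurs in `prodMap`; without it the
-- lambda would have the (only definitionally equal) type `∀ a, Sum.elim F G (Sum.inl a)`.
theorem map_inl_zipWith_glue {A : List (∀ a, F a)} {B : List (∀ b, G b)}
    (h : A.length ≤ B.length) :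
    List.map (β := ∀ a, F a) (fun x a => x (Sum.inl a)) (List.zipWith glue A B) = A := by
  have := List.map_fst_zip h
  rw [List.zip_eq_zipWith, List.map_zipWith] at this
  exact List.map_zipWith.trans this

theorem map_inr_zipWith_glue {A : List (∀ a, F a)} {B : List (∀ b, G b)}
    (h : B.length ≤ A.length) :
    List.map (β := ∀ b, G b) (fun x b => x (Sum.inr b)) (List.zipWith glue A B) = B := by
  have := List.map_snd_zip h
  rw [List.zip_eq_zipWith, List.map_zipWith] at this
  exact List.map_zipWith.trans this

theorem prodMap_zipWith_glue (p : List (∀ a, F a) → List (∀ a, F' a))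
    (q : List (∀ b, G b) → List (∀ b, G' b))
    {A : List (∀ a, F a)} {B : List (∀ b, G b)} (h : A.length = B.length) :
    prodMap p q (List.zipWith glue A B) = List.zipWith glue (p A) (q B) := by
  rw [prodMap, map_inl_zipWith_glue h.le, map_inr_zipWith_glue h.ge]

end ZipGlue

namespace WD

variable {InX OutX InY OutY InZ OutZ : Type}
  {vInX : InX → Type u} {vOutX : OutX → Type u}
  {vInY : InY → Type u} {vOutY : OutY → Type u}
  {vInZ : InZ → Type u} {vOutZ : OutZ → Type u}

section Cascade

variable (φ : WD InX OutX InY OutY vInX vOutX vInY vOutY)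
  (f : List (∀ i, vInX i) → List (∀ o, vOutX o))

theorem C_nil : φ.C f [] = [] := by
  rw [C]

theorem C_of_ne_nil {ℓ : List (∀ i, vInY i)} (hℓ : ℓ ≠ []) :
    φ.C f ℓ = List.zipWith glue ℓ (φ.E f (φ.S' (φ.C f ℓ.dropLast))) := by
  obtain ⟨a, as, rfl⟩ := List.exists_cons_of_ne_nil hℓ
  rw [C]
  rfl

theorem length_S' (ℓ : List (∀ w, φ.vSup w)) : (φ.S' ℓ).length = ℓ.length :=
  List.length_map _

theorem length_S'' (ℓ : List (∀ w : OutX ⊕ φ.D, Sum.elim vOutX φ.vD w)) :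
    (φ.S'' ℓ).length = ℓ.length :=
  List.length_map _

variable {f}

theorem length_E (hf : ∀ ℓ, (f ℓ).length = ℓ.length + 1)
    (ℓ : List (∀ w : InX ⊕ φ.D, Sum.elim vInX φ.vD w)) :
    (φ.E f ℓ).length = ℓ.length + 1 := by
  simp only [E, List.length_zipWith, List.length_cons, hf]
  erw [List.length_map, List.length_map, min_self]

theorem length_C (hf : ∀ ℓ, (f ℓ).length = ℓ.length + 1) (ℓ : List (∀ i, vInY i)) :
    (φ.C f ℓ).length = ℓ.length := by
  induction ℓ using List.reverseRecOn with
  | nil => rw [C_nil]; rfl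
  | append_singleton as a ih =>
    rw [C_of_ne_nil φ f (List.concat_ne_nil a as)]
    refine List.length_zipWith.trans ?_
    rw [length_E φ hf, length_S', List.dropLast_concat, ih, List.length_append,
      List.length_singleton, min_self]

theorem length_P (hf : ∀ ℓ, (f ℓ).length = ℓ.length + 1) (ℓ : List (∀ i, vInY i)) :
    (φ.P f ℓ).length = ℓ.length + 1 := by
  rw [P, length_S'', length_E φ hf, length_S', length_C φ hf]

end Cascade

section Comp

variable (ψ : WD InY OutY InZ OutZ vInY vOutY vInZ vOutZ)
  (φ : WD InX OutX InY OutY vInX vOutX vInY vOutY)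

theorem comp_dD : (ψ.comp φ).dD = glue φ.dD ψ.dD := by
  funext d
  rcases d with d | d <;> rfl

theorem map_inl_map_reassocDem {B : List (∀ w : InX ⊕ φ.D, Sum.elim vInX φ.vD w)}
    {Cl : List (∀ d, ψ.vD d)} (h : B.length ≤ Cl.length) :
    ((List.zipWith glue B Cl).map (reassocDem ψ φ)).map (fun x i => x (Sum.inl i))
      = B.map fun x i => x (Sum.inl i) := by
  have := congrArg (List.map fun x i => x (Sum.inl i)) (map_inl_zipWith_glue h)
  erw [List.map_map] at this
  rw [List.map_map]
  exact this

theorem map_inr_map_reassocDem (B : List (∀ w : InX ⊕ φ.D, Sum.elim vInX φ.vD w))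
    (Cl : List (∀ d, ψ.vD d)) :
    ((List.zipWith glue B Cl).map (reassocDem ψ φ)).map (fun x w => x (Sum.inr w))
      = List.zipWith glue (B.map fun x d => x (Sum.inr d)) Cl := by
  rw [List.map_map, List.map_zipWith, List.zipWith_map_left]
  congr
  funext b c w
  rcases w with d | d <;> rfl

theorem E_comp_map_reassocDem (f : List (∀ i, vInX i) → List (∀ o, vOutX o))
    {B : List (∀ w : InX ⊕ φ.D, Sum.elim vInX φ.vD w)} {Cl : List (∀ d, ψ.vD d)}
    (h : B.length = Cl.length) :
    (ψ.comp φ).E f ((List.zipWith glue B Cl).map (reassocDem ψ φ))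
      = List.zipWith glue (f (B.map fun x i => x (Sum.inl i)))
          (List.zipWith glue (φ.dD :: B.map fun x d => x (Sum.inr d)) (ψ.dD :: Cl)) := by
  unfold E
  erw [map_inl_map_reassocDem ψ φ h.le, map_inr_map_reassocDem, comp_dD]
  rfl

theorem map_reassocSup_zipWith : ∀ (L : List (∀ z, vInZ z)) (F : List (∀ o, vOutX o))
    (G₁ : List (∀ d, φ.vD d)) (G₂ : List (∀ d, ψ.vD d)),
    (List.zipWith glue L (List.zipWith glue F (List.zipWith glue G₁ G₂))).map
        (reassocSup ψ φ)
      = List.zipWith glue L (List.zipWith glue (List.zipWith glue F G₁) G₂)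
  | a :: L, x :: F, b :: G₁, c :: G₂ => by
    simp only [List.zipWith_cons_cons, List.map_cons, map_reassocSup_zipWith L F G₁ G₂]
    congr 1
    funext w
    rcases w with z | (o | d) | d <;> rfl
  | [], _, _, _ | _ :: _, [], _, _ | _ :: _, _ :: _, [], _ | _ :: _, _ :: _, _ :: _, [] => by
    simp

/-- `E_{ψ∘φ,f} = E_{φ,f} × δ¹_ψ`, read through the identifications `reassocDem`, `reassocSup`. -/
theorem map_reassocSup_zipWith_E_comp (f : List (∀ i, vInX i) → List (∀ o, vOutX o))
    (L : List (∀ z, vInZ z)) {B : List (∀ w : InX ⊕ φ.D, Sum.elim vInX φ.vD w)}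
    {Cl : List (∀ d, ψ.vD d)} (h : B.length = Cl.length) :
    (List.zipWith glue L ((ψ.comp φ).E f ((List.zipWith glue B Cl).map (reassocDem ψ φ)))).map
        (reassocSup ψ φ)
      = List.zipWith glue L (List.zipWith glue (φ.E f B) (ψ.dD :: Cl)) := by
  erw [E_comp_map_reassocDem ψ φ f h, map_reassocSup_zipWith]
  rfl

end Comp

end WD

open WD in
theorem cascade_comp_general {InX OutX InY OutY InZ OutZ : Type}
    {vInX : InX → Type u} {vOutX : OutX → Type u}
    {vInY : InY → Type u} {vOutY : OutY → Type u}
    {vInZ : InZ → Type u} {vOutZ : OutZ → Type u}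
    (φ : WD InX OutX InY OutY vInX vOutX vInY vOutY)
    (ψ : WD InY OutY InZ OutZ vInY vOutY vInZ vOutZ)
    (f : List (∀ i, vInX i) → List (∀ o, vOutX o))
    (hf : Historical 1 f)
    (hIH : (fun ℓ : List (∀ z, vInZ z) =>
        (ψ.comp φ).S' ((ψ.comp φ).C f ℓ.dropLast))
      = fun ℓ : List (∀ z, vInZ z) =>
        (prodMap φ.S' (id : List (∀ d, ψ.vD d) → List (∀ d, ψ.vD d))
          (prodMap (φ.C f) (id : List (∀ d, ψ.vD d) → List (∀ d, ψ.vD d))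
            (ψ.S' (ψ.C (φ.P f) ℓ.dropLast)))).map (reassocDem ψ φ)) :
    ψ.C (φ.P f)
      = fun ℓ : List (∀ z, vInZ z) =>
          prodMap (id : List (∀ z, vInZ z) → List (∀ z, vInZ z))
            (prodMap φ.S'' (id : List (∀ d, ψ.vD d) → List (∀ d, ψ.vD d)))
            (((ψ.comp φ).C f ℓ).map (reassocSup ψ φ)) := by
  funext ℓ
  rcases ℓ with _ | ⟨a, as⟩
  · rw [C_nil, C_nil]
    rfl
  rw [C_of_ne_nil _ _ (List.cons_ne_nil a as), C_of_ne_nil _ _ (List.cons_ne_nil a as),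
    congrFun hIH (a :: as)]
  set u := ψ.S' (ψ.C (φ.P f) (a :: as).dropLast)
  set u₁ : List (∀ i, vInY i) := u.map fun x i => x (Sum.inl i)
  set u₂ : List (∀ d, ψ.vD d) := u.map fun x d => x (Sum.inr d)
  set B := φ.S' (φ.C f u₁)
  have hu : u.length = as.length := by
    simp [u, length_S', length_C ψ (length_P φ hf.1)]
  have hu₁ : u₁.length = as.length := (List.length_map _).trans hu
  have hu₂ : u₂.length = as.length := (List.length_map _).trans hu
  have hB : B.length = as.length := by rw [length_S', length_C φ hf.1, hu₁]
  have hE : (φ.E f B).length = as.length + 1 := by rw [length_E φ hf.1, hB]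
  have hδ : (ψ.dD :: u₂).length = as.length + 1 := by rw [List.length_cons, hu₂]
  have hC : prodMap (φ.C f) id u = List.zipWith glue (φ.C f u₁) u₂ := rfl
  rw [hC, prodMap_zipWith_glue _ _ (by rw [length_C φ hf.1, hu₁, hu₂]), id]
  erw [map_reassocSup_zipWith_E_comp ψ φ f _ (hB.trans hu₂.symm),
    prodMap_zipWith_glue id _ (by rw [List.length_zipWith, hE, hδ, min_self, List.length_cons]),
    prodMap_zipWith_glue φ.S'' id (hE.trans hδ.symm)]
  -- `E_{ψ,g} = g × δ¹_ψ` with `g = S''_φ ∘ E_{φ,f} ∘ S'_φ ∘ C_{φ,f}` unfolds to the right side.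
  rfl

open WD in
/-- Let `φ : X → Y`, `ψ : Y → Z` be wiring diagrams, `f ∈ P(X)`, `g = P(φ)(f)` and
`ω = ψ∘φ`.  Assuming the induction hypothesis
`S'_ω ∘ C_{ω,f} ∘ ∂ = (S'_φ × id) ∘ (C_{φ,f} × id) ∘ S'_ψ ∘ C_{ψ,g} ∘ ∂`,
one has `C_{ψ,g} = (id × S''_φ × id) ∘ C_{ω,f}` as functions `⟪In Z⟫ → ⟪Sup ψ⟫`
(using the identification `Sup(ω) = In Z ⊔ inSup(φ) ⊔ D_ψ`). -/
theorem cascade_comp {InX OutX InY OutY InZ OutZ : Type}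
    [Fintype InX] [Fintype OutX] [Fintype InY] [Fintype OutY]
    [Fintype InZ] [Fintype OutZ]
    {vInX : InX → Type u} {vOutX : OutX → Type u}
    {vInY : InY → Type u} {vOutY : OutY → Type u}
    {vInZ : InZ → Type u} {vOutZ : OutZ → Type u}
    (φ : WD InX OutX InY OutY vInX vOutX vInY vOutY)
    (ψ : WD InY OutY InZ OutZ vInY vOutY vInZ vOutZ)
    (f : List (∀ i, vInX i) → List (∀ o, vOutX o))
    (hf : Historical 1 f)
    (hIH : (fun ℓ : List (∀ z, vInZ z) =>
        (ψ.comp φ).S' ((ψ.comp φ).C f ℓ.dropLast))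
      = fun ℓ : List (∀ z, vInZ z) =>
        (prodMap φ.S' (id : List (∀ d, ψ.vD d) → List (∀ d, ψ.vD d))
          (prodMap (φ.C f) (id : List (∀ d, ψ.vD d) → List (∀ d, ψ.vD d))
            (ψ.S' (ψ.C (φ.P f) ℓ.dropLast)))).map (reassocDem ψ φ)) :
    ψ.C (φ.P f)
      = fun ℓ : List (∀ z, vInZ z) =>
          prodMap (id : List (∀ z, vInZ z) → List (∀ z, vInZ z))
            (prodMap φ.S'' (id : List (∀ d, ψ.vD d) → List (∀ d, ψ.vD d)))
            (((ψ.comp φ).C f ℓ).map (reassocSup ψ φ)) :=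
  cascade_comp_general φ ψ f hf hIH
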